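/- arXiv:1703.02866 — 5 statements merged into one kernel-verified Lean document; each statement's English description precedes it below -/
import Mathlib

section
/- Let G be an undirected graph containing a K_ℓ-expansion η (a model of the complete graph on ℓ vertices), and let X ⊆ V(G) with |X| ≤ ℓ − 1. Then there is a unique connected component of G − X that completely contains every supernode η(v_i) disjoint from X. -/
/-- Given a K_ℓ-expansion (pairwise disjoint supernodes, each a nonempty tree,
with an edge of G between every pair) and X with |X| ≤ ℓ−1, there is a unique
connected component of G − X containing every supernode disjoint from X. -/
theorem stmt6 {V : Type} (G : SimpleGraph V) (ℓ : ℕ) (hℓ : 1 ≤ ℓ)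
    (S : Fin ℓ → Set V)
    (hne : ∀ i, (S i).Nonempty)
    (hdisj : ∀ i j, i ≠ j → Disjoint (S i) (S j))
    (htree : ∀ i, (G.induce (S i)).Connected ∧ (G.induce (S i)).IsAcyclic)
    (hedge : ∀ i j, i ≠ j → ∃ u ∈ S i, ∃ v ∈ S j, G.Adj u v)
    (X : Set V) (hXfin : X.Finite) (hX : X.ncard ≤ ℓ - 1) :
    ∃! C : (G.induce Xᶜ).ConnectedComponent,
      ∀ i, Disjoint (S i) X →
        ∀ (v : V) (hv : v ∈ Xᶜ), v ∈ S i →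
          (G.induce Xᶜ).connectedComponentMk ⟨v, hv⟩ = C := by
  -- a helper: vertices of a supernode disjoint from X are reachable in G - X
  have key : ∀ (T : Set V), Disjoint T X → (G.induce T).Connected →
      ∀ u (hu : u ∈ T) v (hv : v ∈ T) (hu' : u ∈ Xᶜ) (hv' : v ∈ Xᶜ),
        (G.induce Xᶜ).Reachable ⟨u, hu'⟩ ⟨v, hv'⟩ := by
    intro T hd hc u hu v hv hu' hv'
    have hsub : T ⊆ Xᶜ := fun x hx => Set.disjoint_left.mp hd hx
    let φ : G.induce T →g G.induce Xᶜ :=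
      ⟨fun x => ⟨x.1, hsub x.2⟩, fun h => h⟩
    have := (hc.preconnected ⟨u, hu⟩ ⟨v, hv⟩).map φ
    exact this
  -- find a supernode disjoint from X
  have hexi : ∃ i₀, Disjoint (S i₀) X := by
    by_contra h
    push_neg at h
    have hch : ∀ i, ∃ x, x ∈ S i ∧ x ∈ X := by
      intro i
      exact Set.not_disjoint_iff.mp (h i)
    choose f hfS hfX using hch
    have hinj : Function.Injective f := by
      intro i j hij
      by_contra hne'
      exact Set.disjoint_left.mp (hdisj i j hne') (hfS i) (hij ▸ hfS j)
    have : Finite X := hXfin.to_subtype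
    have hcard : ℓ ≤ X.ncard := by
      have h1 : Nat.card (Fin ℓ) ≤ Nat.card X :=
        Nat.card_le_card_of_injective (fun i => (⟨f i, hfX i⟩ : X))
          (fun i j hij => hinj (congrArg Subtype.val hij))
      simpa [Nat.card_coe_set_eq] using h1
    omega
  obtain ⟨i₀, hd₀⟩ := hexi
  obtain ⟨v₀, hv₀⟩ := hne i₀
  have hv₀' : v₀ ∈ Xᶜ := Set.disjoint_left.mp hd₀ hv₀
  refine ⟨(G.induce Xᶜ).connectedComponentMk ⟨v₀, hv₀'⟩, ?_, ?_⟩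
  · intro i hdi v hv hvS
    rw [SimpleGraph.ConnectedComponent.eq]
    by_cases hii : i = i₀
    · subst hii
      exact key (S i) hdi (htree i).1 v hvS v₀ hv₀ hv hv₀'
    · obtain ⟨u, hu, w, hw, huw⟩ := hedge i i₀ hii
      have hu' : u ∈ Xᶜ := Set.disjoint_left.mp hdi hu
      have hw' : w ∈ Xᶜ := Set.disjoint_left.mp hd₀ hw
      have r1 := key (S i) hdi (htree i).1 v hvS u hu hv hu'
      have r2 : (G.induce Xᶜ).Adj ⟨u, hu'⟩ ⟨w, hw'⟩ := huw
      have r3 := key (S i₀) hd₀ (htree i₀).1 w hw v₀ hv₀ hw' hv₀'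
      exact (r1.trans r2.reachable).trans r3
  · intro C' hC'
    exact (hC' i₀ hd₀ v₀ hv₀' hv₀).symm
end

section
/- Let G be an undirected graph containing a K_ℓ-expansion η and let X ⊆ V(G) with |X| ≤ ℓ − 1. Then there is a unique block of G − X that intersects every supernode η(v_i) that is disjoint from X. -/
open SimpleGraph

namespace BlockAux

variable {W : Type} {H : SimpleGraph W}

lemma reach_mono {S T : Set W} (hST : S ⊆ T) {u v : ↥S}
    (h : (H.induce S).Reachable u v) :
    (H.induce T).Reachable ⟨u.1, hST u.2⟩ ⟨v.1, hST v.2⟩ := by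
  let f : H.induce S →g H.induce T := ⟨fun w => ⟨w.1, hST w.2⟩, fun {a b} hab => hab⟩
  exact h.map f

lemma connected_singleton (H : SimpleGraph W) (a : W) : (H.induce {a}).Connected := by
  rw [connected_iff]
  refine ⟨?_, ⟨⟨a, rfl⟩⟩⟩
  rintro ⟨u, hu⟩ ⟨v, hv⟩
  simp only [Set.mem_singleton_iff] at hu hv
  subst hu; subst hv
  rfl

lemma connected_union {S T : Set W}
    (hS : (H.induce S).Connected) (hT : (H.induce T).Connected)
    (hint : (S ∩ T).Nonempty) : (H.induce (S ∪ T)).Connected := by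
  obtain ⟨z, hzS, hzT⟩ := hint
  rw [connected_iff]
  refine ⟨?_, ⟨⟨z, Or.inl hzS⟩⟩⟩
  have key : ∀ w (hw : w ∈ S ∪ T), (H.induce (S ∪ T)).Reachable ⟨w, hw⟩ ⟨z, Or.inl hzS⟩ := by
    intro w hw
    rcases hw with h | h
    · exact reach_mono Set.subset_union_left (hS.preconnected ⟨w, h⟩ ⟨z, hzS⟩)
    · exact reach_mono Set.subset_union_right (hT.preconnected ⟨w, h⟩ ⟨z, hzT⟩)
  rintro ⟨u, hu⟩ ⟨v, hv⟩
  exact (key u hu).trans (key v hv).symm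

lemma connected_insert {S : Set W} {a b : W}
    (hS : (H.induce S).Connected) (hb : b ∈ S) (hab : H.Adj a b) :
    (H.induce (insert a S)).Connected := by
  rw [connected_iff]
  refine ⟨?_, ⟨⟨b, Or.inr hb⟩⟩⟩
  have hSsub : S ⊆ insert a S := Set.subset_insert a S
  have key : ∀ w (hw : w ∈ insert a S),
      (H.induce (insert a S)).Reachable ⟨w, hw⟩ ⟨b, Or.inr hb⟩ := by
    intro w hw
    rcases hw with rfl | h
    · exact Adj.reachable (by exact hab)
    · exact reach_mono hSsub (hS.preconnected ⟨w, h⟩ ⟨b, hb⟩)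
  rintro ⟨u, hu⟩ ⟨v, hv⟩
  exact (key u hu).trans (key v hv).symm

lemma connected_support {a b : W} (w : H.Walk a b) :
    (H.induce {v | v ∈ w.support}).Connected := by
  induction w with
  | nil =>
      rename_i u
      have hset : {v | v ∈ (Walk.nil : H.Walk u u).support} = ({u} : Set W) := by
        ext y; simp [Walk.support_nil]
      rw [hset]
      exact connected_singleton H u
  | @cons a c b h p ih =>
      have hset : {v | v ∈ (Walk.cons h p).support} = insert a {v | v ∈ p.support} := by
        ext y; simp [Walk.support_cons]
      rw [hset]
      exact connected_insert ih (Walk.start_mem_support p) h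


def Good (H : SimpleGraph W) (B : Set W) : Prop :=
  (H.induce B).Connected ∧ ∀ x ∈ B, (H.induce (B \ {x})).Connected

lemma Good.del {B : Set W} (hB : Good H B) (x : W) :
    (H.induce (B \ {x})).Connected := by
  by_cases hx : x ∈ B
  · exact hB.2 x hx
  · rw [Set.diff_singleton_eq_self hx]; exact hB.1

lemma split_support {a a' : W} (w : H.Walk a a') (x : W) (hw : w.IsPath) :
    ∃ S1 S2 : Set W, {v | v ∈ w.support} \ {x} = S1 ∪ S2 ∧ x ∉ S1 ∧ x ∉ S2 ∧
      (S1.Nonempty → a ∈ S1 ∧ (H.induce S1).Connected) ∧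
      (S2.Nonempty → a' ∈ S2 ∧ (H.induce S2).Connected) := by
  induction w with
  | nil =>
      rename_i u
      by_cases hx : x = u
      · refine ⟨∅, ∅, ?_, by simp, by simp, by rintro ⟨y, hy⟩; simp at hy,
          by rintro ⟨y, hy⟩; simp at hy⟩
        subst hx; ext y; simp [Walk.support_nil]
      · refine ⟨{u}, ∅, ?_, by simpa using hx, by simp, ?_, by rintro ⟨y, hy⟩; simp at hy⟩
        · ext y
          simp only [Walk.support_nil, Set.mem_diff, Set.mem_setOf_eq, List.mem_singleton,
            Set.mem_singleton_iff, Set.mem_union, Set.mem_empty_iff_false, or_false]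
          constructor
          · rintro ⟨h, _⟩; exact h
          · intro h; exact ⟨h, fun he => hx (h ▸ he.symm ▸ rfl)⟩
        · intro _; exact ⟨rfl, connected_singleton H u⟩
  | @cons a c a' hadj p ih =>
      rw [Walk.cons_isPath_iff] at hw
      by_cases hx : x = a
      · subst hx
        refine ⟨∅, {v | v ∈ p.support}, ?_, by simp, ?_, by rintro ⟨y, hy⟩; simp at hy, ?_⟩
        · ext y
          simp only [Walk.support_cons, Set.mem_diff, Set.mem_setOf_eq, List.mem_cons,
            Set.mem_singleton_iff, Set.mem_union, Set.mem_empty_iff_false, false_or]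
          constructor
          · rintro ⟨h | h, hy⟩
            · exact absurd h hy
            · exact h
          · intro h; exact ⟨Or.inr h, fun he => hw.2 (he ▸ h)⟩
        · exact hw.2
        · intro _; exact ⟨Walk.end_mem_support p, connected_support p⟩
      · obtain ⟨S1, S2, heq, hx1, hx2, h1, h2⟩ := ih hw.1
        refine ⟨insert a S1, S2, ?_, ?_, hx2, ?_, h2⟩
        · ext y
          have hy := (Set.ext_iff.mp heq y)
          simp only [Set.mem_diff, Set.mem_setOf_eq, Set.mem_singleton_iff, Set.mem_union] at hy
          have hax : y = a → ¬ y = x := fun h1 h2 => hx (h2.symm.trans h1)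
          simp only [Walk.support_cons, Set.mem_diff, Set.mem_setOf_eq, List.mem_cons,
            Set.mem_singleton_iff, Set.mem_union, Set.mem_insert_iff]
          constructor
          · rintro ⟨h | h, hyx⟩
            · exact Or.inl (Or.inl h)
            · rcases hy.mp ⟨h, hyx⟩ with h' | h'
              · exact Or.inl (Or.inr h')
              · exact Or.inr h'
          · rintro ((h | h) | h)
            · exact ⟨Or.inl h, hax h⟩
            · obtain ⟨hs, hyx⟩ := hy.mpr (Or.inl h)
              exact ⟨Or.inr hs, hyx⟩
            · obtain ⟨hs, hyx⟩ := hy.mpr (Or.inr h)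
              exact ⟨Or.inr hs, hyx⟩
        · simp only [Set.mem_insert_iff]
          rintro (h | h)
          · exact hx h
          · exact hx1 h
        · intro _
          refine ⟨Set.mem_insert a S1, ?_⟩
          rcases S1.eq_empty_or_nonempty with h | h
          · subst h
            have : (insert a (∅ : Set W)) = {a} := by ext y; simp
            rw [this]
            exact connected_singleton H a
          · obtain ⟨hc, hconn⟩ := h1 h
            exact connected_insert hconn hc hadj

lemma connected_union_opt {C Sx : Set W}
    (hC : (H.induce C).Connected)
    (h : Sx = ∅ ∨ ((Sx ∩ C).Nonempty ∧ (H.induce Sx).Connected)) :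
    (H.induce (C ∪ Sx)).Connected := by
  rcases h with rfl | ⟨hne, hSx⟩
  · rw [Set.union_empty]; exact hC
  · exact connected_union hC hSx (by rwa [Set.inter_comm])

lemma good_ear {B : Set W} (hB : Good H B) {a a' : W}
    (w : H.Walk a a') (hw : w.IsPath) (ha : a ∈ B) (ha' : a' ∈ B) :
    Good H (B ∪ {v | v ∈ w.support}) := by
  constructor
  · exact connected_union hB.1 (connected_support w) ⟨a, ha, Walk.start_mem_support w⟩
  · intro x _
    obtain ⟨S1, S2, heq, hx1, hx2, h1, h2⟩ := split_support w x hw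
    have hset : (B ∪ {v | v ∈ w.support}) \ {x} = ((B \ {x}) ∪ S1) ∪ S2 := by
      rw [Set.union_diff_distrib, heq, Set.union_assoc]
    rw [hset]
    have step1 : (H.induce ((B \ {x}) ∪ S1)).Connected := by
      refine connected_union_opt (hB.del x) ?_
      rcases S1.eq_empty_or_nonempty with h | h
      · exact Or.inl h
      · obtain ⟨haS, hconn⟩ := h1 h
        exact Or.inr ⟨⟨a, haS, ha, fun he => hx1 (he ▸ haS)⟩, hconn⟩
    refine connected_union_opt step1 ?_
    rcases S2.eq_empty_or_nonempty with h | h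
    · exact Or.inl h
    · obtain ⟨haS, hconn⟩ := h2 h
      exact Or.inr ⟨⟨a', haS, Or.inl ⟨ha', fun he => hx2 (he ▸ haS)⟩⟩, hconn⟩


lemma good_glue_aux {B B' : Set W} (hB : Good H B) (hB' : Good H B')
    {a a' b b' : W} (p : H.Walk a a') (q : H.Walk b b') (hp : p.IsPath)
    (ha : a ∈ B) (ha' : a' ∈ B') (hb : b ∈ B) (hb' : b' ∈ B')
    (x : W) (hxq : x ∉ q.support) :
    (H.induce ((B ∪ B' ∪ {v | v ∈ p.support} ∪ {v | v ∈ q.support}) \ {x})).Connected := by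
  obtain ⟨S1, S2, heq, hx1, hx2, h1, h2⟩ := split_support p x hp
  have hmem : ∀ y, y ∈ S1 ∪ S2 ↔ (y ∈ p.support ∧ ¬ y = x) := by
    intro y
    have hy := (Set.ext_iff.mp heq y)
    simpa [Set.mem_diff] using hy.symm
  have hset : (B ∪ B' ∪ {v | v ∈ p.support} ∪ {v | v ∈ q.support}) \ {x}
      = ((((B \ {x}) ∪ {v | v ∈ q.support}) ∪ (B' \ {x})) ∪ S1) ∪ S2 := by
    ext y
    have hy := hmem y
    simp only [Set.mem_union] at hy
    have hqx : y ∈ q.support → ¬ y = x := fun h1 h2 => hxq (h2 ▸ h1)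
    have hsx : y ∈ S1 → ¬ y = x := fun h1 h2 => hx1 (h2 ▸ h1)
    have hsx2 : y ∈ S2 → ¬ y = x := fun h1 h2 => hx2 (h2 ▸ h1)
    simp only [Set.mem_diff, Set.mem_union, Set.mem_setOf_eq, Set.mem_singleton_iff]
    constructor
    · rintro ⟨(((h | h) | h) | h), hyx⟩
      · exact Or.inl (Or.inl (Or.inl (Or.inl ⟨h, hyx⟩)))
      · exact Or.inl (Or.inl (Or.inr ⟨h, hyx⟩))
      · rcases hy.mpr ⟨h, hyx⟩ with h' | h'
        · exact Or.inl (Or.inr h')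
        · exact Or.inr h'
      · exact Or.inl (Or.inl (Or.inl (Or.inr h)))
    · rintro ((((⟨h, hyx⟩ | h) | ⟨h, hyx⟩) | h) | h)
      · exact ⟨Or.inl (Or.inl (Or.inl h)), hyx⟩
      · exact ⟨Or.inr h, hqx h⟩
      · exact ⟨Or.inl (Or.inl (Or.inr h)), hyx⟩
      · exact ⟨Or.inl (Or.inr (hy.mp (Or.inl h)).1), hsx h⟩
      · exact ⟨Or.inl (Or.inr (hy.mp (Or.inr h)).1), hsx2 h⟩
  rw [hset]
  have hbx : b ∈ B \ {x} := ⟨hb, fun h => hxq (h ▸ Walk.start_mem_support q)⟩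
  have hbx' : b' ∈ B' \ {x} := ⟨hb', fun h => hxq (h ▸ Walk.end_mem_support q)⟩
  have c1 : (H.induce ((B \ {x}) ∪ {v | v ∈ q.support})).Connected :=
    connected_union (hB.del x) (connected_support q) ⟨b, hbx, Walk.start_mem_support q⟩
  have c2 : (H.induce (((B \ {x}) ∪ {v | v ∈ q.support}) ∪ (B' \ {x}))).Connected :=
    connected_union c1 (hB'.del x) ⟨b', Or.inr (Walk.end_mem_support q), hbx'⟩
  have c3 : (H.induce ((((B \ {x}) ∪ {v | v ∈ q.support}) ∪ (B' \ {x})) ∪ S1)).Connected := by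
    refine connected_union_opt c2 ?_
    rcases S1.eq_empty_or_nonempty with h | h
    · exact Or.inl h
    · obtain ⟨haS, hconn⟩ := h1 h
      exact Or.inr ⟨⟨a, haS, Or.inl (Or.inl ⟨ha, fun he => hx1 (he ▸ haS)⟩)⟩, hconn⟩
  refine connected_union_opt c3 ?_
  rcases S2.eq_empty_or_nonempty with h | h
  · exact Or.inl h
  · obtain ⟨haS, hconn⟩ := h2 h
    exact Or.inr ⟨⟨a', haS, Or.inl (Or.inr ⟨ha', fun he => hx2 (he ▸ haS)⟩)⟩, hconn⟩

lemma good_glue {B B' : Set W} (hB : Good H B) (hB' : Good H B')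
    {a a' b b' : W} (p : H.Walk a a') (q : H.Walk b b') (hp : p.IsPath) (hq : q.IsPath)
    (ha : a ∈ B) (ha' : a' ∈ B') (hb : b ∈ B) (hb' : b' ∈ B')
    (hdisj : ∀ y ∈ p.support, y ∉ q.support) :
    Good H (B ∪ B' ∪ {v | v ∈ p.support} ∪ {v | v ∈ q.support}) := by
  constructor
  · have c1 : (H.induce (B ∪ {v | v ∈ p.support})).Connected :=
      connected_union hB.1 (connected_support p) ⟨a, ha, Walk.start_mem_support p⟩
    have c2 : (H.induce ((B ∪ {v | v ∈ p.support}) ∪ B')).Connected :=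
      connected_union c1 hB'.1 ⟨a', Or.inr (Walk.end_mem_support p), ha'⟩
    have c3 : (H.induce (((B ∪ {v | v ∈ p.support}) ∪ B') ∪ {v | v ∈ q.support})).Connected :=
      connected_union c2 (connected_support q)
        ⟨b, Or.inl (Or.inl hb), Walk.start_mem_support q⟩
    have hset : ((B ∪ {v | v ∈ p.support}) ∪ B') ∪ {v | v ∈ q.support}
        = B ∪ B' ∪ {v | v ∈ p.support} ∪ {v | v ∈ q.support} := by
      ext y; simp only [Set.mem_union]; tauto
    rw [← hset]; exact c3
  · intro x _
    by_cases hxq : x ∈ q.support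
    · have hxp : x ∉ p.support := fun h => hdisj x h hxq
      have := good_glue_aux hB hB' q p hq hb hb' ha ha' x hxp
      have hset : (B ∪ B' ∪ {v | v ∈ q.support} ∪ {v | v ∈ p.support}) \ {x}
          = (B ∪ B' ∪ {v | v ∈ p.support} ∪ {v | v ∈ q.support}) \ {x} := by
        ext y; simp only [Set.mem_diff, Set.mem_union]; tauto
      rw [← hset]; exact this
    · exact good_glue_aux hB hB' p q hp ha ha' hb hb' x hxq

lemma good_pair {u v : W} (h : H.Adj u v) : Good H {u, v} := by
  constructor
  · rw [connected_iff]
    refine ⟨?_, ⟨⟨u, Or.inl rfl⟩⟩⟩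
    have key : ∀ w (hw : w ∈ ({u, v} : Set W)),
        (H.induce {u, v}).Reachable ⟨w, hw⟩ ⟨u, Or.inl rfl⟩ := by
      intro w hw
      rcases hw with rfl | rfl
      · rfl
      · exact Adj.reachable (by exact h.symm)
    rintro ⟨y, hy⟩ ⟨z, hz⟩
    exact (key y hy).trans (key z hz).symm
  · intro x hx
    rcases hx with rfl | rfl
    · have : ({x, v} : Set W) \ {x} = {v} := by
        ext y
        simp only [Set.mem_diff, Set.mem_insert_iff, Set.mem_singleton_iff]
        constructor
        · rintro ⟨h1 | h1, h2⟩
          · exact absurd h1 h2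
          · exact h1
        · intro h1; exact ⟨Or.inr h1, fun h2 => h.ne (h2.symm.trans h1)⟩
      rw [this]; exact connected_singleton H v
    · have : ({u, x} : Set W) \ {x} = {u} := by
        ext y
        simp only [Set.mem_diff, Set.mem_insert_iff, Set.mem_singleton_iff]
        constructor
        · rintro ⟨h1 | h1, h2⟩
          · exact h1
          · exact absurd h1 h2
        · intro h1; exact ⟨Or.inl h1, fun h2 => h.ne (h1.symm.trans h2)⟩
      rw [this]; exact connected_singleton H u

lemma exists_maximal_good {B0 : Set W} (h0 : Good H B0) :
    ∃ B, B0 ⊆ B ∧ Good H B ∧ ∀ C, B ⊆ C → Good H C → C = B := by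
  have hchainub : ∀ c ⊆ {B : Set W | Good H B}, IsChain (· ⊆ ·) c → c.Nonempty →
      ∃ ub ∈ {B : Set W | Good H B}, ∀ s ∈ c, s ⊆ ub := by
    intro c hcS hchain hcne
    refine ⟨⋃₀ c, ?_, fun s hs => Set.subset_sUnion_of_mem hs⟩
    obtain ⟨s0, hs0⟩ := hcne
    have hs0' : Good H s0 := hcS hs0
    have hne : (⋃₀ c).Nonempty := by
      obtain ⟨z, hz⟩ := hs0'.1.nonempty
      exact ⟨z, s0, hs0, hz⟩
    constructor
    · rw [connected_iff]
      refine ⟨?_, ⟨⟨hne.choose, hne.choose_spec⟩⟩⟩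
      rintro ⟨y, hy⟩ ⟨z, hz⟩
      obtain ⟨s1, hs1, hy1⟩ := hy
      obtain ⟨s2, hs2, hz2⟩ := hz
      rcases hchain.total hs1 hs2 with hss | hss
      · exact reach_mono (Set.subset_sUnion_of_mem hs2)
          ((hcS hs2).1.preconnected ⟨y, hss hy1⟩ ⟨z, hz2⟩)
      · exact reach_mono (Set.subset_sUnion_of_mem hs1)
          ((hcS hs1).1.preconnected ⟨y, hy1⟩ ⟨z, hss hz2⟩)
    · intro x hx
      obtain ⟨sx, hsx, hxx⟩ := hx
      rw [connected_iff]
      constructor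
      · rintro ⟨y, hy, hyx⟩ ⟨z, hz, hzx⟩
        obtain ⟨s1, hs1, hy1⟩ := hy
        obtain ⟨s2, hs2, hz2⟩ := hz
        have hsub2 : ∀ s ∈ c, s \ {x} ⊆ (⋃₀ c) \ {x} := by
          intro s hs w hw
          exact ⟨Set.subset_sUnion_of_mem hs hw.1, hw.2⟩
        rcases hchain.total hs1 hs2 with hss | hss
        · exact reach_mono (hsub2 s2 hs2)
            (((hcS hs2).del x).preconnected ⟨y, hss hy1, hyx⟩ ⟨z, hz2, hzx⟩)
        · exact reach_mono (hsub2 s1 hs1)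
            (((hcS hs1).del x).preconnected ⟨y, hy1, hyx⟩ ⟨z, hss hz2, hzx⟩)
      · obtain ⟨z, hz⟩ := ((hcS hsx).2 x hxx).nonempty
        exact ⟨⟨z, ⟨sx, hsx, hz.1⟩, hz.2⟩⟩
  obtain ⟨m, hsub, hmax⟩ := zorn_subset_nonempty {B : Set W | Good H B} hchainub B0 h0
  exact ⟨m, hsub, hmax.prop, fun C hmC hC => hmax.eq_of_ge hC hmC⟩


lemma supernode_path {V : Type} (G : SimpleGraph V) (X : Set V) (T : Set V)
    (hT : (G.induce T).Connected) (hTX : ∀ v ∈ T, v ∈ (Xᶜ : Set V))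
    {u v : V} (hu : u ∈ T) (hv : v ∈ T) :
    ∃ p : (G.induce (Xᶜ : Set V)).Walk ⟨u, hTX u hu⟩ ⟨v, hTX v hv⟩,
      p.IsPath ∧ ∀ y ∈ p.support, (y : V) ∈ T := by
  classical
  let f : G.induce T →g G.induce (Xᶜ : Set V) :=
    ⟨fun w => ⟨w.1, hTX w.1 w.2⟩, fun {a b} hab => hab⟩
  have hinj : Function.Injective f := by
    intro a b hab
    have h2 : (f a).val = (f b).val := congrArg Subtype.val hab
    exact Subtype.ext h2
  obtain ⟨w0⟩ := hT.preconnected ⟨u, hu⟩ ⟨v, hv⟩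
  refine ⟨(w0.toPath.1).map f, Walk.map_isPath_of_injective hinj w0.toPath.2, ?_⟩
  intro y hy
  rw [Walk.support_map] at hy
  obtain ⟨z, hz, rfl⟩ := List.mem_map.mp hy
  exact z.2

lemma isPath_triple {W : Type} {H : SimpleGraph W} {a b c d e f : W}
    (p1 : H.Walk a b) (h1 : H.Adj b c) (p2 : H.Walk c d) (h2 : H.Adj d e) (p3 : H.Walk e f)
    (hp1 : p1.IsPath) (hp2 : p2.IsPath) (hp3 : p3.IsPath)
    (h12 : ∀ y ∈ p1.support, y ∉ p2.support)
    (h13 : ∀ y ∈ p1.support, y ∉ p3.support)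
    (h23 : ∀ y ∈ p2.support, y ∉ p3.support) :
    (p1.append (Walk.cons h1 (p2.append (Walk.cons h2 p3)))).IsPath ∧
    (∀ y, y ∈ (p1.append (Walk.cons h1 (p2.append (Walk.cons h2 p3)))).support ↔
      y ∈ p1.support ∨ y ∈ p2.support ∨ y ∈ p3.support) := by
  have hs : (p1.append (Walk.cons h1 (p2.append (Walk.cons h2 p3)))).support
      = p1.support ++ (p2.support ++ p3.support) := by
    rw [Walk.support_append, Walk.support_cons, List.tail_cons, Walk.support_append,
      Walk.support_cons, List.tail_cons]
  constructor
  · rw [Walk.isPath_def, hs]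
    refine List.Nodup.append hp1.support_nodup ?_ ?_
    · exact List.Nodup.append hp2.support_nodup hp3.support_nodup h23
    · intro y hy1 hy2
      rcases List.mem_append.mp hy2 with h | h
      · exact h12 y hy1 h
      · exact h13 y hy1 h
  · intro y
    rw [hs]
    simp only [List.mem_append]

end BlockAux


/-- `B` is a block of `G`: the induced subgraph is connected, has no cut vertex,
and `B` is maximal with these properties. -/
def IsBlock {V : Type} (G : SimpleGraph V) (B : Set V) : Prop :=
  (G.induce B).Connected ∧
  (∀ x : V, x ∈ B → (G.induce (B \ {x})).Connected) ∧
  ∀ B2 : Set V, B ⊆ B2 → (G.induce B2).Connected →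
    (∀ x : V, x ∈ B2 → (G.induce (B2 \ {x})).Connected) → B2 = B

/-- Given a K_ℓ-expansion and X with |X| ≤ ℓ−1 (and at least two supernodes
disjoint from X), there is a unique block of G − X intersecting every supernode
disjoint from X. -/
theorem stmt7 {V : Type} (G : SimpleGraph V) (ℓ : ℕ)
    (S : Fin ℓ → Set V)
    (hne : ∀ i, (S i).Nonempty)
    (hdisj : ∀ i j, i ≠ j → Disjoint (S i) (S j))
    (htree : ∀ i, (G.induce (S i)).Connected ∧ (G.induce (S i)).IsAcyclic)
    (hedge : ∀ i j, i ≠ j → ∃ u ∈ S i, ∃ v ∈ S j, G.Adj u v)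
    (X : Set V) (hXfin : X.Finite) (hX : X.ncard ≤ ℓ - 1)
    (htwo : ∃ i j : Fin ℓ, i ≠ j ∧ Disjoint (S i) X ∧ Disjoint (S j) X) :
    ∃! B : Set ↥(Xᶜ : Set V), IsBlock (G.induce (Xᶜ : Set V)) B ∧
      ∀ i, Disjoint (S i) X →
        ∃ (v : V) (hv : v ∈ (Xᶜ : Set V)), v ∈ S i ∧ (⟨v, hv⟩ : ↥(Xᶜ : Set V)) ∈ B := by
  classical
  obtain ⟨i, j, hij, hiX, hjX⟩ := htwo
  have hmemC : ∀ (k : Fin ℓ), Disjoint (S k) X → ∀ v ∈ S k, v ∈ (Xᶜ : Set V) := by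
    intro k hk v hv
    exact fun hvX => Set.disjoint_left.mp hk hv hvX
  obtain ⟨u, hu, v, hv, huv⟩ := hedge i j hij
  have huC := hmemC i hiX u hu
  have hvC := hmemC j hjX v hv
  have hadjH : (G.induce (Xᶜ : Set V)).Adj ⟨u, huC⟩ ⟨v, hvC⟩ := huv
  obtain ⟨B, hB0sub, hBgood, hBmax⟩ :=
    BlockAux.exists_maximal_good (BlockAux.good_pair hadjH)
  have huB : (⟨u, huC⟩ : ↥(Xᶜ : Set V)) ∈ B := hB0sub (Or.inl rfl)
  have hvB : (⟨v, hvC⟩ : ↥(Xᶜ : Set V)) ∈ B := hB0sub (Or.inr rfl)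
  have hblockB : IsBlock (G.induce (Xᶜ : Set V)) B :=
    ⟨hBgood.1, hBgood.2, fun B2 hsub hc hd => hBmax B2 hsub ⟨hc, hd⟩⟩
  have hcov : ∀ k, Disjoint (S k) X →
      ∃ (w : V) (hw : w ∈ (Xᶜ : Set V)), w ∈ S k ∧ (⟨w, hw⟩ : ↥(Xᶜ : Set V)) ∈ B := by
    intro k hk
    by_cases hki : k = i
    · exact ⟨u, huC, hki ▸ hu, huB⟩
    by_cases hkj : k = j
    · exact ⟨v, hvC, hkj ▸ hv, hvB⟩
    obtain ⟨u1, hu1, w1, hw1, he1⟩ := hedge i k (fun h => hki h.symm)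
    obtain ⟨w2, hw2, v1, hv1, he2⟩ := hedge k j hkj
    obtain ⟨p1, hp1, hp1T⟩ :=
      BlockAux.supernode_path G X (S i) (htree i).1 (hmemC i hiX) hu hu1
    obtain ⟨p2, hp2, hp2T⟩ :=
      BlockAux.supernode_path G X (S k) (htree k).1 (hmemC k hk) hw1 hw2
    obtain ⟨p3, hp3, hp3T⟩ :=
      BlockAux.supernode_path G X (S j) (htree j).1 (hmemC j hjX) hv1 hv
    have he1H : (G.induce (Xᶜ : Set V)).Adj ⟨u1, hmemC i hiX u1 hu1⟩ ⟨w1, hmemC k hk w1 hw1⟩ := he1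
    have he2H : (G.induce (Xᶜ : Set V)).Adj ⟨w2, hmemC k hk w2 hw2⟩ ⟨v1, hmemC j hjX v1 hv1⟩ := he2
    have d12 : ∀ y ∈ p1.support, y ∉ p2.support := fun y hy1 hy2 =>
      Set.disjoint_left.mp (hdisj i k (fun h => hki h.symm)) (hp1T y hy1) (hp2T y hy2)
    have d13 : ∀ y ∈ p1.support, y ∉ p3.support := fun y hy1 hy2 =>
      Set.disjoint_left.mp (hdisj i j hij) (hp1T y hy1) (hp3T y hy2)
    have d23 : ∀ y ∈ p2.support, y ∉ p3.support := fun y hy1 hy2 =>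
      Set.disjoint_left.mp (hdisj k j hkj) (hp2T y hy1) (hp3T y hy2)
    obtain ⟨hPath, hSupp⟩ :=
      BlockAux.isPath_triple p1 he1H p2 he2H p3 hp1 hp2 hp3 d12 d13 d23
    have hear := BlockAux.good_ear hBgood _ hPath huB hvB
    have heq := hBmax _ Set.subset_union_left hear
    refine ⟨w1, hmemC k hk w1 hw1, hw1, ?_⟩
    rw [← heq]
    exact Or.inr ((hSupp _).mpr (Or.inr (Or.inl p2.start_mem_support)))
  refine ⟨B, ⟨hblockB, hcov⟩, ?_⟩
  rintro B2 ⟨hblock2, hcov2⟩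
  obtain ⟨a2, ha2C, ha2S, ha2B⟩ := hcov2 i hiX
  obtain ⟨b2, hb2C, hb2S, hb2B⟩ := hcov2 j hjX
  have hgood2 : BlockAux.Good (G.induce (Xᶜ : Set V)) B2 := ⟨hblock2.1, hblock2.2.1⟩
  obtain ⟨p, hp, hpT⟩ :=
    BlockAux.supernode_path G X (S i) (htree i).1 (hmemC i hiX) hu ha2S
  obtain ⟨q, hq, hqT⟩ :=
    BlockAux.supernode_path G X (S j) (htree j).1 (hmemC j hjX) hv hb2S
  have hdisjpq : ∀ y ∈ p.support, y ∉ q.support := fun y hy1 hy2 =>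
    Set.disjoint_left.mp (hdisj i j hij) (hpT y hy1) (hqT y hy2)
  have hglue := BlockAux.good_glue hBgood hgood2 p q hp hq huB ha2B hvB hb2B hdisjpq
  have heq := hBmax _ (fun y hy => Or.inl (Or.inl (Or.inl hy))) hglue
  have hB2B : B2 ⊆ B := fun y hy => heq ▸ (Or.inl (Or.inl (Or.inr hy)) :
    y ∈ B ∪ B2 ∪ {w | w ∈ p.support} ∪ {w | w ∈ q.support})
  exact (hblock2.2.2 B hB2B hBgood.1 hBgood.2).symm
end

section
/- Let G be an undirected graph and Z a well-linked set in G, i.e., for all subsets Z₁, Z₂ ⊆ Z with |Z₁| = |Z₂| ≤ |Z|/2 there exist |Z₁| vertex-disjoint paths from Z₁ to Z₂. Then for any set X ⊆ V(G) with |X| < |Z|/2 and any connected component C of G − X, either |V(C) ∩ Z| ≤ |X| or |Z \ (V(C) ∪ X)| ≤ |X|. -/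
/-!
If both sides of the alternative failed, we could choose `|X| + 1` vertices of `Z` in the
component `C` and `|X| + 1` vertices of `Z` outside `C ∪ X`, and well-linkedness would join them
by `|X| + 1` disjoint paths. Each of these paths runs from `C` into another component of `G − X`,
so it meets `X`; as the paths are disjoint, `X` would have `|X| + 1` elements.
-/

/-- A `Z₁`–`Z₂` linkage: a family of pairwise vertex-disjoint paths pairing up
`Z₁` with `Z₂`. -/
def Linkage {V : Type} (G : SimpleGraph V) (Z₁ Z₂ : Finset V) : Prop :=
  ∃ (e : Z₁ → Z₂) (P : (z : Z₁) → G.Walk z.1 (e z).1),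
    Function.Bijective e ∧ (∀ z, (P z).IsPath) ∧
    ∀ z z' : Z₁, z ≠ z' → ∀ x, x ∈ (P z).support → x ∉ (P z').support

variable {V : Type} {G : SimpleGraph V}

def IsWellLinked (G : SimpleGraph V) (Z : Finset V) : Prop :=
  ∀ Z₁ Z₂ : Finset V, Z₁ ⊆ Z → Z₂ ⊆ Z → Z₁.card = Z₂.card → 2 * Z₁.card ≤ Z.card →
    Linkage G Z₁ Z₂

def Separates (G : SimpleGraph V) (X A B : Finset V) : Prop :=
  ∀ u ∈ A, ∀ v ∈ B, ∀ w : G.Walk u v, ∃ x ∈ w.support, x ∈ X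

lemma SimpleGraph.Walk.exists_mem_support_notMem_of_connectedComponentMk_ne {s : Set V}
    {u v : V} (w : G.Walk u v) (hu : u ∈ s) (hv : v ∈ s)
    (hne : (G.induce s).connectedComponentMk ⟨u, hu⟩ ≠
      (G.induce s).connectedComponentMk ⟨v, hv⟩) :
    ∃ x ∈ w.support, x ∉ s := by
  by_contra! hw
  exact hne (ConnectedComponent.sound (w.induce s hw).reachable)

lemma Linkage.card_le_of_separates {Z₁ Z₂ X : Finset V} (hL : Linkage G Z₁ Z₂)
    (hsep : Separates G X Z₁ Z₂) : Z₁.card ≤ X.card := by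
  obtain ⟨e, P, -, -, hdisj⟩ := hL
  choose g hgP hgX using fun z : Z₁ => hsep z z.2 (e z) (e z).2 (P z)
  have hinj : Function.Injective fun z => (⟨g z, hgX z⟩ : X) := by
    intro z z' h
    simp only [Subtype.mk.injEq] at h
    by_contra hne
    exact hdisj z z' hne (g z) (hgP z) (h ▸ hgP z')
  simpa using Fintype.card_le_of_injective _ hinj

lemma IsWellLinked.card_le_or_card_le_of_separates {Z X A B : Finset V}
    (hwl : IsWellLinked G Z) (hA : A ⊆ Z) (hB : B ⊆ Z) (hAB : Disjoint A B)
    (hsep : Separates G X A B) : A.card ≤ X.card ∨ B.card ≤ X.card := by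
  classical
  by_contra! h
  obtain ⟨Z₁, hZ₁A, hZ₁⟩ := Finset.exists_subset_card_eq h.1
  obtain ⟨Z₂, hZ₂B, hZ₂⟩ := Finset.exists_subset_card_eq h.2
  have hcard : A.card + B.card ≤ Z.card := by
    rw [← Finset.card_disjUnion A B hAB]
    exact Finset.card_le_card (by simpa using Finset.union_subset hA hB)
  have hL := hwl Z₁ Z₂ (hZ₁A.trans hA) (hZ₂B.trans hB) (hZ₁.trans hZ₂.symm) (by omega)
  have := hL.card_le_of_separates fun u hu v hv => hsep u (hZ₁A hu) v (hZ₂B hv)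
  omega

theorem stmt8_general {V : Type} (G : SimpleGraph V)
    (Z : Finset V)
    (hwl : ∀ Z₁ Z₂ : Finset V, Z₁ ⊆ Z → Z₂ ⊆ Z → Z₁.card = Z₂.card →
      2 * Z₁.card ≤ Z.card → Linkage G Z₁ Z₂)
    (X : Finset V)
    (C : (G.induce ((↑X : Set V)ᶜ)).ConnectedComponent) :
    ((↑Z : Set V) ∩ {v : V | ∃ hv : v ∈ ((↑X : Set V)ᶜ),
        (G.induce ((↑X : Set V)ᶜ)).connectedComponentMk ⟨v, hv⟩ = C}).ncard ≤ X.card ∨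
    ((↑Z : Set V) \ ({v : V | ∃ hv : v ∈ ((↑X : Set V)ᶜ),
        (G.induce ((↑X : Set V)ᶜ)).connectedComponentMk ⟨v, hv⟩ = C} ∪ ↑X)).ncard ≤ X.card := by
  classical
  set S : Set V := {v : V | ∃ hv : v ∈ ((↑X : Set V)ᶜ),
    (G.induce ((↑X : Set V)ᶜ)).connectedComponentMk ⟨v, hv⟩ = C}
  have hsep : Separates G X (Z.filter (· ∈ S)) (Z.filter (· ∉ S ∪ ↑X)) := by
    intro u hu v hv w
    obtain ⟨huX, huC⟩ := (Finset.mem_filter.1 hu).2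
    have hv' := (Finset.mem_filter.1 hv).2
    have hvX : v ∉ (↑X : Set V) := fun h => hv' (Or.inr h)
    simpa using w.exists_mem_support_notMem_of_connectedComponentMk_ne huX hvX
      fun h => hv' (Or.inl ⟨hvX, h ▸ huC⟩)
  have key := IsWellLinked.card_le_or_card_le_of_separates hwl (Finset.filter_subset _ Z)
    (Finset.filter_subset _ Z) (Finset.disjoint_filter.2 fun _ _ h h' => h' (Or.inl h)) hsep
  rwa [← Set.ncard_coe_finset (Z.filter _), ← Set.ncard_coe_finset (Z.filter _),
    Finset.coe_filter, Finset.coe_filter] at key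

/-- If Z is well-linked in G, then for any X with |X| < |Z|/2 and any connected
component C of G − X, either |V(C) ∩ Z| ≤ |X| or |Z \ (V(C) ∪ X)| ≤ |X|. -/
theorem stmt8 {V : Type} [Fintype V] [DecidableEq V] (G : SimpleGraph V)
    (Z : Finset V)
    (hwl : ∀ Z₁ Z₂ : Finset V, Z₁ ⊆ Z → Z₂ ⊆ Z → Z₁.card = Z₂.card →
      2 * Z₁.card ≤ Z.card → Linkage G Z₁ Z₂)
    (X : Finset V) (hX : 2 * X.card < Z.card)
    (C : (G.induce ((↑X : Set V)ᶜ)).ConnectedComponent) :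
    ((↑Z : Set V) ∩ {v : V | ∃ hv : v ∈ ((↑X : Set V)ᶜ),
        (G.induce ((↑X : Set V)ᶜ)).connectedComponentMk ⟨v, hv⟩ = C}).ncard ≤ X.card ∨
    ((↑Z : Set V) \ ({v : V | ∃ hv : v ∈ ((↑X : Set V)ᶜ),
        (G.induce ((↑X : Set V)ᶜ)).connectedComponentMk ⟨v, hv⟩ = C} ∪ ↑X)).ncard ≤ X.card :=
  stmt8_general G Z hwl X C
end

section
/- Let (G,Λ) be a Γ-labeled graph whose underlying undirected graph has treewidth at most w, and let k ≥ 1. Then either G contains k vertex-disjoint non-null cycles, or there is a set X ⊆ V(G) with |X| ≤ (k−1)(w+1) such that G − X has no non-null cycles. -/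
/-- The label (ordered product of arc labels) of a walk in a `Γ`-labeled graph,
where the labeling is given as a skew-symmetric function `Λ : V → V → Γ`. -/
def walkLabel {V : Type} {Γ : Type} [Group Γ] (G : SimpleGraph V) (Λ : V → V → Γ) :
    {u v : V} → G.Walk u v → Γ
  | _, _, SimpleGraph.Walk.nil => 1
  | _, _, SimpleGraph.Walk.cons (u := a) (v := b) _ p => Λ a b * walkLabel G Λ p
/-- `G` has a tree decomposition of width at most `w`. -/
def HasTreewidthLE {V : Type} (G : SimpleGraph V) (w : ℕ) : Prop :=
  ∃ (ι : Type) (T : SimpleGraph ι) (bag : ι → Set V),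
    T.Connected ∧ T.IsAcyclic ∧
    (∀ v : V, ∃ b : ι, v ∈ bag b) ∧
    (∀ u v : V, G.Adj u v → ∃ b : ι, u ∈ bag b ∧ v ∈ bag b) ∧
    (∀ v : V, (T.induce {b : ι | v ∈ bag b}).Connected) ∧
    (∀ b : ι, (bag b).Finite ∧ (bag b).ncard ≤ w + 1)

/-!
The argument works for any family of finite connected vertex sets, such as the vertex
sets of non-null cycles. Root the tree decomposition and call a node a host if some such set lies below
it. If a host `t` has no proper descendant that is a host, every set below `t` meets the
bag of `t`; so once the at most `w + 1` vertices of that bag are deleted, all remaining sets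
are disjoint from a fixed set below `t`, and induction on `k` yields either `k` disjoint sets
or a hitting set made of `k - 1` bags. Since the decomposition may be infinite, there may be
no such host; then there is an infinite descending chain of hosts. The vertices lying in
all but finitely many bags of the chain form a set `K` of at most `w + 1` vertices; a set
avoiding `K` eventually leaves the subtrees of the chain, so either the sets avoiding `K`
give infinitely many disjoint ones, or deep enough in the chain every set below meets `K`,
and the bag there plays the role of the bag of `t` above.
-/

open Filter Function Set

theorem exists_seq_of_forall_exists {α : Type*} {s : Set α} {R : α → α → Prop} {a : α}
    (ha : a ∈ s) (h : ∀ x ∈ s, ∃ y ∈ s, R x y) :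
    ∃ f : ℕ → α, (∀ n, f n ∈ s) ∧ ∀ n, R (f n) (f (n + 1)) := by
  choose g hgs hR using h
  let f : ℕ → s := fun n => n.rec ⟨a, ha⟩ fun _ x => ⟨g x x.2, hgs x x.2⟩
  exact ⟨fun n => (f n).1, fun n => (f n).2, fun n => hR _ (f n).2⟩

theorem Set.finite_setOf_eventually_mem {α β : Type*} {l : Filter β} [l.NeBot] {f : β → Set α}
    {n : ℕ} (hf : ∀ b, (f b).Finite ∧ (f b).ncard ≤ n) : {a | ∀ᶠ b in l, a ∈ f b}.Finite := by
  by_contra hinf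
  obtain ⟨F, hFK, hFfin, hFcard⟩ := Set.Infinite.exists_subset_ncard_eq hinf (n + 1)
  obtain ⟨b, hb⟩ := ((hFfin.eventually_all (l := l)).2 fun a ha => hFK ha).exists
  have := Set.ncard_le_ncard hb (hf b).1
  have := (hf b).2
  omega

theorem Pairwise.fin_cons {α : Type*} {R : α → α → Prop} [Std.Symm R] {n : ℕ} {a : α}
    {f : Fin n → α} (hf : Pairwise (R on f)) (ha : ∀ i, R a (f i)) :
    Pairwise (R on (Fin.cons a f : Fin (n + 1) → α)) := by
  intro i j hij
  cases i using Fin.cases <;> cases j using Fin.cases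
  · exact absurd rfl hij
  · exact ha _
  · exact symm (ha _)
  · exact hf (ne_of_apply_ne Fin.succ hij)

namespace SimpleGraph

variable {V ι : Type*}

theorem Preconnected.induce_induction {G : SimpleGraph V} {s : Set V}
    (hs : (G.induce s).Preconnected) {P : V → Prop}
    (hP : ∀ u ∈ s, ∀ v ∈ s, G.Adj u v → P u → P v) {a : V} (ha : a ∈ s) (hPa : P a) :
    ∀ v ∈ s, P v := by
  suffices ∀ x : s, Relation.ReflTransGen (G.induce s).Adj ⟨a, ha⟩ x → P x from
    fun v hv => this ⟨v, hv⟩ ((reachable_iff_reflTransGen _ _).mp (hs _ _))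
  intro x hx
  induction hx with
  | refl => exact hPa
  | tail _ hadj ih => exact hP _ (Subtype.prop _) _ (Subtype.prop _) hadj ih

/-- In a tree rooted at `r`, this says that `t` lies on the path from `r` to `s`. -/
def IsAncestor (T : SimpleGraph ι) (r t s : ι) : Prop :=
  ∀ p : T.Walk r s, t ∈ p.support

namespace IsAncestor

variable {T : SimpleGraph ι} {r s t u : ι}

theorem refl (T : SimpleGraph ι) (r s : ι) : T.IsAncestor r s s :=
  fun p => p.end_mem_support

theorem trans (hut : T.IsAncestor r u t) (hts : T.IsAncestor r t s) : T.IsAncestor r u s := by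
  classical
  intro p
  exact p.support_takeUntil_subset_support (hts p) (hut _)

theorem of_adj (hus : T.Adj u s) (htu : T.IsAncestor r t u) (hne : t ≠ u) :
    T.IsAncestor r t s := by
  intro p
  have := htu (p.concat hus.symm)
  simpa [Walk.support_concat, hne] using this

theorem dist_le (hT : T.Connected) (h : T.IsAncestor r t s) : T.dist r t ≤ T.dist r s := by
  classical
  obtain ⟨p, hp⟩ := hT.exists_walk_length_eq_dist r s
  exact hp ▸ (SimpleGraph.dist_le _).trans (p.length_takeUntil_le_length (h p))

theorem dist_lt (hT : T.Connected) (h : T.IsAncestor r t s) (hne : t ≠ s) :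
    T.dist r t < T.dist r s := by
  classical
  obtain ⟨p, hp⟩ := hT.exists_walk_length_eq_dist r s
  exact hp ▸ (SimpleGraph.dist_le _).trans_lt (Walk.length_takeUntil_lt_length (h p) hne)

end IsAncestor

def IsDescendingChain (T : SimpleGraph ι) (r : ι) (t : ℕ → ι) : Prop :=
  ∀ n, T.IsAncestor r (t n) (t (n + 1)) ∧ t n ≠ t (n + 1)

namespace IsDescendingChain

variable {T : SimpleGraph ι} {r : ι} {t : ℕ → ι}

theorem isAncestor (ht : T.IsDescendingChain r t) {m n : ℕ} (hmn : m ≤ n) :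
    T.IsAncestor r (t m) (t n) := by
  induction n, hmn using Nat.le_induction with
  | base => exact .refl T r _
  | succ n _ ih => exact ih.trans (ht n).1

theorem strictMono_dist (ht : T.IsDescendingChain r t) (hT : T.Connected) :
    StrictMono fun n => T.dist r (t n) :=
  strictMono_nat_of_lt_succ fun n => (ht n).1.dist_lt hT (ht n).2

end IsDescendingChain

theorem isAncestor_iff_of_preconnected {T : SimpleGraph ι} {r t a b : ι} {s : Set ι}
    (hs : (T.induce s).Preconnected) (ht : t ∉ s) (ha : a ∈ s) (hb : b ∈ s) :
    T.IsAncestor r t a ↔ T.IsAncestor r t b := by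
  have key : ∀ a ∈ s, T.IsAncestor r t a → ∀ b ∈ s, T.IsAncestor r t b := fun a ha =>
    hs.induce_induction
      (fun u hu _ _ huv htu => htu.of_adj huv (ne_of_mem_of_not_mem hu ht).symm) ha
  exact ⟨fun h => key a ha h b hb, fun h => key b hb h a ha⟩

theorem IsAcyclic.isAncestor_of_mem_support {T : SimpleGraph ι} (hT : T.IsAcyclic) {r t s : ι}
    {p : T.Walk r s} (hp : p.IsPath) (ht : t ∈ p.support) : T.IsAncestor r t s := by
  classical
  intro q
  have : q.bypass = p :=
    congrArg Subtype.val ((hT.subsingleton_path r s).elim ⟨_, q.bypass_isPath⟩ ⟨p, hp⟩)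
  exact q.support_bypass_subset_support (this ▸ ht)

theorem IsTree.exists_isAncestor_forall {T : SimpleGraph ι} (hT : T.IsTree) (r : ι) {s : Set ι}
    (hs : (T.induce s).Connected) : ∃ m ∈ s, ∀ x ∈ s, T.IsAncestor r m x := by
  classical
  have hne : s.Nonempty := let ⟨x⟩ := hs.nonempty; ⟨x, x.2⟩
  set m := argminOn (T.dist r) s hne
  have hm : m ∈ s := argminOn_mem _ _ hne
  refine ⟨m, hm, hs.preconnected.induce_induction ?_ hm (IsAncestor.refl T r m)⟩
  intro u _ v hv huv hmu
  by_contra hmv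
  obtain ⟨p, hp⟩ : ∃ p : T.Walk r v, m ∉ p.support := by
    simpa [IsAncestor] using hmv
  -- the walk to `v` continues to `u`, so it reaches `m` only at its last step
  obtain rfl : m = u := by simpa [Walk.support_concat, hp] using hmu (p.concat huv.symm)
  have hvm : T.IsAncestor r v m :=
    hT.isAcyclic.isAncestor_of_mem_support
      ((p.bypass_isPath).concat (fun h => hp (p.support_bypass_subset_support h)) huv.symm)
      (by simp [Walk.support_concat])
  exact (hvm.dist_lt hT.connected huv.ne').not_ge (argminOn_le _ _ hv)

structure TreeDecomposition (G : SimpleGraph V) (ι : Type*) where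
  tree : SimpleGraph ι
  isTree : tree.IsTree
  bag : ι → Set V
  exists_mem_bag (v : V) : ∃ i, v ∈ bag i
  exists_mem_bag_of_adj {u v : V} : G.Adj u v → ∃ i, u ∈ bag i ∧ v ∈ bag i
  connected_induce_bags (v : V) : (tree.induce {i | v ∈ bag i}).Connected

namespace TreeDecomposition

variable {G : SimpleGraph V} (D : G.TreeDecomposition ι) (r : ι)

def below (t : ι) : Set V := {v | ∃ i, D.tree.IsAncestor r t i ∧ v ∈ D.bag i}

variable {D r}

theorem below_anti {t t' : ι} (h : D.tree.IsAncestor r t t') : D.below r t' ⊆ D.below r t :=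
  fun _ ⟨i, hi, hv⟩ => ⟨i, h.trans hi, hv⟩

theorem mem_bag_of_isAncestor {v : V} {i j t : ι} (hi : v ∈ D.bag i) (hj : v ∈ D.bag j)
    (htj : D.tree.IsAncestor r t j) (hti : ¬D.tree.IsAncestor r t i) : v ∈ D.bag t := by
  by_contra hv
  exact hti
    ((isAncestor_iff_of_preconnected (D.connected_induce_bags v).preconnected hv hj hi).1 htj)

theorem mem_below_of_adj {u v : V} {t : ι} (huv : G.Adj u v) (hu : u ∈ D.below r t)
    (hut : u ∉ D.bag t) : v ∈ D.below r t := by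
  obtain ⟨i, hui, hvi⟩ := D.exists_mem_bag_of_adj huv
  obtain ⟨j, htj, huj⟩ := hu
  by_cases hti : D.tree.IsAncestor r t i
  · exact ⟨i, hti, hvi⟩
  · exact absurd (mem_bag_of_isAncestor hui huj htj hti) hut

theorem subset_below_of_disjoint {S : Set V} {t : ι} (hS : (G.induce S).Preconnected)
    (hSt : Disjoint S (D.bag t)) (hmeet : (S ∩ D.below r t).Nonempty) : S ⊆ D.below r t := by
  obtain ⟨a, haS, hat⟩ := hmeet
  exact hS.induce_induction
    (fun u hu _ _ huv h => mem_below_of_adj huv h (hSt.notMem_of_mem_left hu)) haS hat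

theorem connected_induce_bags_inter {S : Set V} (hS : (G.induce S).Connected) :
    (D.tree.induce {i | (D.bag i ∩ S).Nonempty}).Connected := by
  set N := {i | (D.bag i ∩ S).Nonempty}
  have hbags : ∀ v ∈ S, ∀ i j (hi : i ∈ N) (hj : j ∈ N), v ∈ D.bag i → v ∈ D.bag j →
      (D.tree.induce N).Reachable ⟨i, hi⟩ ⟨j, hj⟩ := fun v hv i j _ _ hvi hvj =>
    ((D.connected_induce_bags v).preconnected ⟨i, hvi⟩ ⟨j, hvj⟩).map
      (D.tree.induceHomOfLE fun k (hk : v ∈ D.bag k) =>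
        show (D.bag k ∩ S).Nonempty from ⟨v, hk, hv⟩).toHom
  obtain ⟨a, haS⟩ : S.Nonempty := let ⟨x⟩ := hS.nonempty; ⟨x, x.2⟩
  obtain ⟨i₀, hai₀⟩ := D.exists_mem_bag a
  have hi₀ : i₀ ∈ N := ⟨a, hai₀, haS⟩
  have key : ∀ v ∈ S, ∀ i (hi : i ∈ N), v ∈ D.bag i →
      (D.tree.induce N).Reachable ⟨i₀, hi₀⟩ ⟨i, hi⟩ := by
    refine hS.preconnected.induce_induction ?_ haS
      fun i hi hai => hbags a haS i₀ i hi₀ hi hai₀ hai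
    intro u hu v hv huv hreach i hi hvi
    obtain ⟨c, huc, hvc⟩ := D.exists_mem_bag_of_adj huv
    have hc : c ∈ N := ⟨v, hvc, hv⟩
    exact (hreach c hc huc).trans (hbags v hv c i hc hi hvc hvi)
  rw [connected_iff_exists_forall_reachable]
  exact ⟨⟨i₀, hi₀⟩, fun ⟨i, hi⟩ => let ⟨v, hvi, hvS⟩ := hi; key v hvS i hi hvi⟩

theorem exists_top {S : Set V} (hS : (G.induce S).Connected) :
    ∃ m, S ⊆ D.below r m ∧ ∀ t, S ⊆ D.below r t → Disjoint S (D.bag t) →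
      D.tree.IsAncestor r t m ∧ t ≠ m := by
  obtain ⟨m, ⟨z, hzm, hzS⟩, hm⟩ :=
    D.isTree.exists_isAncestor_forall r (connected_induce_bags_inter (D := D) hS)
  refine ⟨m, fun v hv => ?_, fun t hSt hdisj => ⟨?_, ?_⟩⟩
  · obtain ⟨i, hvi⟩ := D.exists_mem_bag v
    exact ⟨i, hm i ⟨v, hvi, hv⟩, hvi⟩
  · obtain ⟨j, htj, hzj⟩ := hSt hzS
    by_contra htm
    exact hdisj.notMem_of_mem_left hzS (mem_bag_of_isAncestor hzm hzj htj htm)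
  · rintro rfl
    exact hdisj.notMem_of_mem_left hzS hzm

section ErdosPosa

variable {𝓒 : Set (Set V)} {w : ℕ}

variable (D r 𝓒) in
def IsBottleneck (t : ι) : Prop :=
  (∃ S ∈ 𝓒, S ⊆ D.below r t) ∧ ∀ S ∈ 𝓒, S ⊆ D.below r t → ¬Disjoint S (D.bag t)

theorem IsBottleneck.disjoint {t : ι} (ht : D.IsBottleneck r 𝓒 t)
    (h𝓒 : ∀ S ∈ 𝓒, (G.induce S).Preconnected) {cs S : Set V} (hcs : cs ⊆ D.below r t)
    (hS : S ∈ 𝓒) (hSt : Disjoint S (D.bag t)) : Disjoint S cs := by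
  by_contra h
  obtain ⟨v, hvS, hvcs⟩ := not_disjoint_iff.mp h
  exact ht.2 S hS (subset_below_of_disjoint (h𝓒 S hS) hSt ⟨v, hvS, hcs hvcs⟩) hSt

theorem isBottleneck_of_minimal (h𝓒 : ∀ S ∈ 𝓒, (G.induce S).Connected) {m : ι}
    (hm : ∃ S ∈ 𝓒, S ⊆ D.below r m)
    (hmin : ∀ t, (∃ S ∈ 𝓒, S ⊆ D.below r t) → D.tree.IsAncestor r m t → t = m) :
    D.IsBottleneck r 𝓒 m := by
  refine ⟨hm, fun S hS hSm hdisj => ?_⟩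
  obtain ⟨m', hSm', hm'⟩ := exists_top (D := D) (r := r) (h𝓒 S hS)
  obtain ⟨hanc, hne⟩ := hm' m hSm hdisj
  exact hne (hmin m' ⟨S, hS, hSm'⟩ hanc).symm

section DescendingChain

variable {t : ℕ → ι}

theorem mem_bag_of_le_of_le (ht : D.tree.IsDescendingChain r t) {v : V}
    {i j k : ℕ} (hi : v ∈ D.bag (t i)) (hk : v ∈ D.bag (t k)) (hij : i ≤ j) (hjk : j ≤ k) :
    v ∈ D.bag (t j) := by
  rcases hij.eq_or_lt with rfl | hij
  · exact hi
  refine mem_bag_of_isAncestor hi hk (ht.isAncestor hjk) fun h => ?_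
  exact (h.dist_le D.isTree.connected).not_gt (ht.strictMono_dist D.isTree.connected hij)

theorem eventually_notMem_bag (ht : D.tree.IsDescendingChain r t) {v : V}
    (hv : ¬∀ᶠ n in atTop, v ∈ D.bag (t n)) : ∀ᶠ n in atTop, v ∉ D.bag (t n) := by
  by_contra h
  rw [not_eventually, frequently_atTop] at h
  simp only [not_not] at h
  obtain ⟨i, -, hi⟩ := h 0
  refine hv (eventually_atTop.2 ⟨i, fun j hij => ?_⟩)
  obtain ⟨k, hjk, hk⟩ := h j
  exact mem_bag_of_le_of_le ht hi hk hij hjk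

theorem eventually_disjoint_below (ht : D.tree.IsDescendingChain r t)
    {S : Set V} (hS : S.Finite) (hSc : (G.induce S).Connected)
    (hSK : Disjoint S {v | ∀ᶠ n in atTop, v ∈ D.bag (t n)}) :
    ∀ᶠ n in atTop, Disjoint S (D.below r (t n)) := by
  obtain ⟨m, -, hm⟩ := exists_top (D := D) (r := r) hSc
  have hbag : ∀ᶠ n in atTop, Disjoint S (D.bag (t n)) := by
    simpa only [Set.disjoint_left] using (hS.eventually_all (l := atTop)).2
      fun v hv => eventually_notMem_bag ht (hSK.notMem_of_mem_left hv)
  filter_upwards [hbag, eventually_gt_atTop (D.tree.dist r m)] with n hn hmn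
  by_contra h
  obtain ⟨hanc, hne⟩ :=
    hm _ (subset_below_of_disjoint hSc.preconnected hn (not_disjoint_iff_nonempty_inter.mp h)) hn
  have := hanc.dist_lt D.isTree.connected hne
  have := (ht.strictMono_dist D.isTree.connected).id_le n
  simp only [id] at this
  omega

theorem exists_seq_or_isBottleneck_of_descendingChain (ht : D.tree.IsDescendingChain r t)
    (hw : ∀ i, (D.bag i).Finite ∧ (D.bag i).ncard ≤ w + 1)
    (h𝓒 : ∀ S ∈ 𝓒, S.Finite ∧ (G.induce S).Connected) (hmem : ∀ n, ∃ S ∈ 𝓒, S ⊆ D.below r (t n)) :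
    (∃ s : ℕ → Set V, (∀ n, s n ∈ 𝓒) ∧ Pairwise (Disjoint on s)) ∨ ∃ t', D.IsBottleneck r 𝓒 t' := by
  set K := {v | ∀ᶠ n in atTop, v ∈ D.bag (t n)}
  by_cases hfree : ∀ n, ∃ S ∈ 𝓒, S ⊆ D.below r (t n) ∧ Disjoint S K
  · left
    obtain ⟨s, hs, hdisj⟩ :=
      exists_seq_of_forall_finset_exists' (fun S => S ∈ 𝓒 ∧ Disjoint S K) Disjoint fun F hF => by
        have : ∀ᶠ n in atTop, ∀ S ∈ F, Disjoint S (D.below r (t n)) :=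
          F.eventually_all.2 fun S hS =>
            eventually_disjoint_below ht (h𝓒 S (hF S hS).1).1 (h𝓒 S (hF S hS).1).2 (hF S hS).2
        obtain ⟨n, hn⟩ := this.exists
        obtain ⟨S, hS, hSn, hSK⟩ := hfree n
        exact ⟨S, ⟨hS, hSK⟩, fun S' hS' => (hn S' hS').mono_right hSn⟩
    exact ⟨s, fun n => (hs n).1, hdisj⟩
  · right
    push Not at hfree
    obtain ⟨n, hn⟩ := hfree
    have hK : ∀ᶠ m in atTop, K ⊆ D.bag (t m) :=
      ((Set.finite_setOf_eventually_mem fun m => hw (t m)).eventually_all (l := atTop)).2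
        fun v hv => hv
    obtain ⟨m, hnm, hKm⟩ := ((eventually_ge_atTop n).and hK).exists
    exact ⟨t m, hmem m, fun S hS hSm hdisj =>
      hn S hS (hSm.trans (below_anti (ht.isAncestor hnm))) (hdisj.mono_right hKm)⟩

end DescendingChain

theorem exists_seq_or_isBottleneck (hw : ∀ i, (D.bag i).Finite ∧ (D.bag i).ncard ≤ w + 1)
    (h𝓒 : ∀ S ∈ 𝓒, S.Finite ∧ (G.induce S).Connected) (hne : 𝓒.Nonempty) :
    (∃ s : ℕ → Set V, (∀ n, s n ∈ 𝓒) ∧ Pairwise (Disjoint on s)) ∨ ∃ t, D.IsBottleneck r 𝓒 t := by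
  set hosts := {t | ∃ S ∈ 𝓒, S ⊆ D.below r t}
  by_cases hmin : ∃ m ∈ hosts, ∀ t ∈ hosts, D.tree.IsAncestor r m t → t = m
  · obtain ⟨m, hm, hmin⟩ := hmin
    exact .inr ⟨m, isBottleneck_of_minimal (fun S hS => (h𝓒 S hS).2) hm hmin⟩
  · push Not at hmin
    obtain ⟨S, hS⟩ := hne
    obtain ⟨m, hSm, -⟩ := exists_top (D := D) (r := r) (h𝓒 S hS).2
    obtain ⟨t, hmem, ht⟩ := exists_seq_of_forall_exists (s := hosts)
      (R := fun m t => D.tree.IsAncestor r m t ∧ m ≠ t) ⟨S, hS, hSm⟩ fun m hm =>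
        let ⟨t, ht, hanc, hne⟩ := hmin m hm
        ⟨t, ht, hanc, hne.symm⟩
    exact exists_seq_or_isBottleneck_of_descendingChain ht hw h𝓒 hmem

variable (D) in
theorem exists_pairwise_disjoint_or_exists_hitting_set
    (hw : ∀ i, (D.bag i).Finite ∧ (D.bag i).ncard ≤ w + 1) (k : ℕ) (𝓒 : Set (Set V))
    (h𝓒 : ∀ S ∈ 𝓒, S.Finite ∧ (G.induce S).Connected) :
    (∃ s : Fin (k + 1) → Set V, (∀ i, s i ∈ 𝓒) ∧ Pairwise (Disjoint on s)) ∨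
      ∃ X : Set V, X.Finite ∧ X.ncard ≤ k * (w + 1) ∧ ∀ S ∈ 𝓒, ¬Disjoint S X := by
  obtain ⟨r⟩ := D.isTree.connected.nonempty
  induction k generalizing 𝓒 with
  | zero =>
    rcases 𝓒.eq_empty_or_nonempty with rfl | ⟨S, hS⟩
    · exact .inr ⟨∅, by simp⟩
    · exact .inl ⟨fun _ => S, fun _ => hS,
        fun i j hij => absurd (Subsingleton.elim (α := Fin 1) i j) hij⟩
  | succ k ih =>
    rcases 𝓒.eq_empty_or_nonempty with rfl | hne
    · exact .inr ⟨∅, by simp⟩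
    rcases exists_seq_or_isBottleneck (r := r) hw h𝓒 hne with ⟨s, hs, hdisj⟩ | ⟨t, hbot⟩
    · exact .inl ⟨fun i => s i, fun i => hs i, hdisj.comp_of_injective Fin.val_injective⟩
    obtain ⟨cs, hcs, hcst⟩ := hbot.1
    -- members avoiding the bag of `t` avoid `cs`, so the induction runs on them
    rcases ih {S ∈ 𝓒 | Disjoint S (D.bag t)} fun S hS => h𝓒 S hS.1 with
      ⟨s, hs, hdisj⟩ | ⟨X, hXfin, hXcard, hX⟩
    · refine .inl ⟨Fin.cons cs s, Fin.cases hcs fun i => (hs i).1, hdisj.fin_cons fun i => ?_⟩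
      exact (hbot.disjoint (fun S hS => (h𝓒 S hS).2.preconnected) hcst (hs i).1 (hs i).2).symm
    · refine .inr ⟨X ∪ D.bag t, hXfin.union (hw t).1, ?_, fun S hS h => ?_⟩
      · calc (X ∪ D.bag t).ncard ≤ X.ncard + (D.bag t).ncard := ncard_union_le _ _
          _ ≤ k * (w + 1) + (w + 1) := add_le_add hXcard (hw t).2
          _ = (k + 1) * (w + 1) := by ring
      · rw [disjoint_union_right] at h
        exact hX S ⟨hS, h.2⟩ h.1

end ErdosPosa

end TreeDecomposition

end SimpleGraph

theorem HasTreewidthLE.exists_treeDecomposition {V : Type} {G : SimpleGraph V} {w : ℕ}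
    (h : HasTreewidthLE G w) :
    ∃ (ι : Type) (D : G.TreeDecomposition ι), ∀ i, (D.bag i).Finite ∧ (D.bag i).ncard ≤ w + 1 :=
  let ⟨ι, T, bag, hconn, hacyc, hcov, hedge, hbc, hw⟩ := h
  ⟨ι, ⟨T, ⟨hconn, hacyc⟩, bag, hcov, fun h => hedge _ _ h, hbc⟩, hw⟩

theorem stmt9_general {V Γ : Type} [Group Γ] (G : SimpleGraph V) (Λ : V → V → Γ)
    (w k : ℕ) (htw : HasTreewidthLE G w) :
    (∃ (x : Fin k → V) (c : ∀ i : Fin k, G.Walk (x i) (x i)),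
      (∀ i, (c i).IsCycle ∧ walkLabel G Λ (c i) ≠ 1) ∧
      (∀ i j : Fin k, i ≠ j → ∀ v ∈ (c i).support, v ∉ (c j).support)) ∨
    (∃ X : Set V, X.Finite ∧ X.ncard ≤ (k - 1) * (w + 1) ∧
      ∀ (u : V) (c : G.Walk u u), c.IsCycle →
        (∀ v ∈ c.support, v ∉ X) → walkLabel G Λ c = 1) := by
  obtain ⟨ι, D, hw⟩ := htw.exists_treeDecomposition
  rcases k with _ | k
  · exact .inl ⟨Fin.elim0, fun i => i.elim0, fun i => i.elim0, fun i => i.elim0⟩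
  rcases D.exists_pairwise_disjoint_or_exists_hitting_set hw k
      {S | ∃ (u : V) (c : G.Walk u u), c.IsCycle ∧ walkLabel G Λ c ≠ 1 ∧ S = {v | v ∈ c.support}}
      (by rintro _ ⟨u, c, -, -, rfl⟩; exact ⟨c.support.finite_toSet, c.connected_induce_support⟩)
    with ⟨s, hs, hdisj⟩ | ⟨X, hXfin, hXcard, hX⟩
  · choose x c hcyc hlabel hsupp using hs
    refine .inl ⟨x, c, fun i => ⟨hcyc i, hlabel i⟩, fun i j hij v hvi hvj => ?_⟩
    exact (hdisj hij).notMem_of_mem_left (by rw [hsupp i]; exact hvi) (by rw [hsupp j]; exact hvj)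
  · refine .inr ⟨X, hXfin, by simpa using hXcard, fun u c hc hcX => ?_⟩
    by_contra h
    exact hX _ ⟨u, c, hc, h, rfl⟩ (disjoint_left.2 hcX)

/-- In a Γ-labeled graph of treewidth at most w, for every k ≥ 1, either there
are k vertex-disjoint non-null cycles or there is a group feedback vertex set of
size at most (k−1)(w+1). -/
theorem stmt9 {V Γ : Type} [Group Γ] (G : SimpleGraph V) (Λ : V → V → Γ)
    (hskew : ∀ u v : V, Λ v u = (Λ u v)⁻¹)
    (w k : ℕ) (hk : 1 ≤ k) (htw : HasTreewidthLE G w) :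
    (∃ (x : Fin k → V) (c : ∀ i : Fin k, G.Walk (x i) (x i)),
      (∀ i, (c i).IsCycle ∧ walkLabel G Λ (c i) ≠ 1) ∧
      (∀ i j : Fin k, i ≠ j → ∀ v ∈ (c i).support, v ∉ (c j).support)) ∨
    (∃ X : Set V, X.Finite ∧ X.ncard ≤ (k - 1) * (w + 1) ∧
      ∀ (u : V) (c : G.Walk u u), c.IsCycle →
        (∀ v ∈ c.support, v ∉ X) → walkLabel G Λ c = 1) :=
  stmt9_general G Λ w k htw
end

section
/- Let (G,Λ) be a Γ-labeled graph with a separation (A,B) such that G[A] is clean (contains no non-null cycle) and all arcs with both endpoints in A are labeled 1_Γ. Let Q ⊆ V(G) and suppose C is a non-null cycle in G − Q passing through a vertex v ∈ A \ B. If P is a subpath of C between two vertices α, β ∈ A ∩ B that is internally disjoint from A ∩ B and contains v, and if there exists an α–β path P' in G[A] − v − Q, then replacing P by P' in C yields a non-null closed walk in (G − v) − Q; consequently Q is not a group feedback vertex set of G − v. -/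
open SimpleGraph Walk

namespace SimpleGraph.Walk

variable {V : Type} {G : SimpleGraph V}

theorem exists_eq_append_loop_of_not_isPath {u v : V} (p : G.Walk u v) (hp : ¬p.IsPath) :
    ∃ (x : V) (a : G.Walk u x) (c : G.Walk x x) (b : G.Walk x v),
      0 < c.length ∧ p = a.append (c.append b) := by
  classical
  induction p with
  | nil => exact absurd IsPath.nil hp
  | @cons u w v h q ih =>
    rw [cons_isPath_iff, not_and_or, not_not] at hp
    rcases hp with hq | hu
    · obtain ⟨x, a, c, b, hc, rfl⟩ := ih hq
      exact ⟨x, cons h a, c, b, hc, rfl⟩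
    · refine ⟨u, nil, cons h (q.takeUntil u hu), q.dropUntil u hu, by simp, ?_⟩
      simp

theorem IsCycle.eq_or_eq_of_mem_support_of_mem_support {u v x : V} {p : G.Walk u v}
    {q : G.Walk v u} (hc : (p.append q).IsCycle) (hp : x ∈ p.support) (hq : x ∈ q.support) :
    x = u ∨ x = v := by
  have hdisj := List.disjoint_of_nodup_append (tail_support_append p q ▸ hc.support_nodup)
  rw [mem_support_iff] at hp hq
  rcases hp with rfl | hp
  · exact .inl rfl
  rcases hq with rfl | hq
  · exact .inr rfl
  exact (hdisj hp hq).elim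

end SimpleGraph.Walk

section Labels

variable {V Γ : Type} [Group Γ] {G : SimpleGraph V} {Λ : V → V → Γ}

theorem walkLabel_append {u v w : V} (p : G.Walk u v) (q : G.Walk v w) :
    walkLabel G Λ (p.append q) = walkLabel G Λ p * walkLabel G Λ q := by
  induction p with
  | nil => simp [walkLabel]
  | cons h p ih => simp [walkLabel, ih, mul_assoc]

theorem walkLabel_eq_one_of_forall_mem_support {A : Set V}
    (hid : ∀ u w : V, G.Adj u w → u ∈ A → w ∈ A → Λ u w = 1)
    {u v : V} (p : G.Walk u v) (hA : ∀ x ∈ p.support, x ∈ A) :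
    walkLabel G Λ p = 1 := by
  induction p with
  | nil => rfl
  | @cons a b _ h p ih =>
    simp only [support_cons, List.mem_cons, forall_eq_or_imp] at hA
    rw [walkLabel, hid a b h hA.1 (hA.2 b p.start_mem_support), ih hA.2, one_mul]

theorem walkLabel_cons_eq_one_of_mem_edges (hskew : ∀ u v : V, Λ v u = (Λ u v)⁻¹)
    {u a : V} (h : G.Adj u a) (r : G.Walk a u) (hr : r.IsPath) (he : s(u, a) ∈ r.edges) :
    walkLabel G Λ (cons h r) = 1 := by
  cases r with
  | nil => simp at he
  | @cons _ c _ h' r' =>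
    rw [cons_isPath_iff] at hr
    rcases List.mem_cons.mp he with he | he
    · obtain rfl : u = c := Sym2.congr_right.mp (Sym2.eq_swap.symm.trans he)
      obtain rfl : r' = nil := (isPath_iff_nil.mp hr.1).eq_nil
      simp [walkLabel, hskew a u]
    · exact absurd (r'.snd_mem_support_of_mem_edges he) hr.2

theorem exists_isCycle_walkLabel_ne_one (hskew : ∀ u v : V, Λ v u = (Λ u v)⁻¹)
    {u : V} (w : G.Walk u u) (hw : walkLabel G Λ w ≠ 1) :
    ∃ (y : V) (c : G.Walk y y), c.IsCycle ∧ walkLabel G Λ c ≠ 1 ∧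
      ∀ x ∈ c.support, x ∈ w.support := by
  induction hn : w.length using Nat.strong_induction_on generalizing u w with
  | _ n ih =>
  cases w with
  | nil => exact absurd rfl hw
  | @cons _ a _ h r =>
    by_cases hr : r.IsPath
    · have he : s(u, a) ∉ r.edges := fun he =>
        hw (walkLabel_cons_eq_one_of_mem_edges hskew h r hr he)
      exact ⟨u, cons h r, (cons_isCycle_iff r h).mpr ⟨hr, he⟩, hw, fun _ hx => hx⟩
    obtain ⟨x, p, c, b, hc, rfl⟩ := r.exists_eq_append_loop_of_not_isPath hr
    simp only [length_cons, length_append] at hn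
    have hsupp : ∀ z, z ∈ (cons h (p.append b)).support ∨ z ∈ c.support →
        z ∈ (cons h (p.append (c.append b))).support := by
      simp only [support_cons, List.mem_cons, mem_support_append_iff]; tauto
    by_cases hcl : walkLabel G Λ c = 1
    · have hlabel : walkLabel G Λ (cons h (p.append b)) =
          walkLabel G Λ (cons h (p.append (c.append b))) := by
        simp only [walkLabel, walkLabel_append, hcl, one_mul]
      obtain ⟨y, c', hc', hne, hsub⟩ := ih _ (by simp only [length_cons, length_append]; omega)
        (cons h (p.append b)) (hlabel ▸ hw) rfl
      exact ⟨y, c', hc', hne, fun z hz => hsupp z (.inl (hsub z hz))⟩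
    · obtain ⟨y, c', hc', hne, hsub⟩ := ih _ (by omega) c hcl rfl
      exact ⟨y, c', hc', hne, fun z hz => hsupp z (.inr (hsub z hz))⟩

end Labels

theorem stmt11_general {V Γ : Type} [Group Γ] (G : SimpleGraph V) (Λ : V → V → Γ)
    (hskew : ∀ u v : V, Λ v u = (Λ u v)⁻¹)
    (A B : Set V)
    (hid : ∀ u w : V, G.Adj u w → u ∈ A → w ∈ A → Λ u w = 1)
    (Q : Set V) (v : V) (hv : v ∈ A \ B)
    (α β : V) (hα : α ∈ A ∩ B) (hβ : β ∈ A ∩ B)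
    (P : G.Walk α β) (Rest : G.Walk β α)
    (hcyc : (P.append Rest).IsCycle)
    (hQdisj : ∀ x ∈ (P.append Rest).support, x ∉ Q)
    (hnn : walkLabel G Λ (P.append Rest) ≠ 1)
    (hvP : v ∈ P.support)
    (hPA : ∀ x ∈ P.support, x ∈ A)
    (P' : G.Walk α β)
    (hP'A : ∀ x ∈ P'.support, x ∈ A)
    (hP'v : v ∉ P'.support) (hP'Q : ∀ x ∈ P'.support, x ∉ Q) :
    walkLabel G Λ (P'.append Rest) ≠ 1 ∧
    (∀ x ∈ (P'.append Rest).support, x ∉ Q ∧ x ≠ v) ∧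
    ∃ (y : V) (c : G.Walk y y), c.IsCycle ∧ walkLabel G Λ c ≠ 1 ∧
      ∀ x ∈ c.support, x ∉ Q ∧ x ≠ v := by
  have hlabel : walkLabel G Λ (P'.append Rest) = walkLabel G Λ (P.append Rest) := by
    simp only [walkLabel_append, walkLabel_eq_one_of_forall_mem_support hid P hPA,
      walkLabel_eq_one_of_forall_mem_support hid P' hP'A]
  have hvRest : v ∉ Rest.support := fun hvR => by
    rcases hcyc.eq_or_eq_of_mem_support_of_mem_support hvP hvR with rfl | rfl
    exacts [hv.2 hα.2, hv.2 hβ.2]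
  have havoid : ∀ x ∈ (P'.append Rest).support, x ∉ Q ∧ x ≠ v := by
    intro x hx
    rcases (mem_support_append_iff _ _).mp hx with hx | hx
    · exact ⟨hP'Q x hx, by rintro rfl; exact hP'v hx⟩
    · refine ⟨hQdisj x ((mem_support_append_iff _ _).mpr (.inr hx)), ?_⟩
      rintro rfl; exact hvRest hx
  have hnn' : walkLabel G Λ (P'.append Rest) ≠ 1 := hlabel ▸ hnn
  obtain ⟨y, c, hc, hcnn, hcsub⟩ := exists_isCycle_walkLabel_ne_one hskew _ hnn'
  exact ⟨hnn', havoid, y, c, hc, hcnn, fun x hx => havoid x (hcsub x hx)⟩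

/-- Rerouting a non-null cycle through a clean side of a separation: replacing
the subpath P (inside the clean, identity-labeled side A) by another path P' in
G[A] − v − Q yields a non-null closed walk avoiding Q and v; hence Q is not a
group feedback vertex set of G − v. -/
theorem stmt11 {V Γ : Type} [Group Γ] (G : SimpleGraph V) (Λ : V → V → Γ)
    (hskew : ∀ u v : V, Λ v u = (Λ u v)⁻¹)
    (A B : Set V) (hcover : A ∪ B = Set.univ)
    (hnoedge : ∀ u w : V, G.Adj u w → u ∈ A \ B → w ∉ B \ A)
    (hclean : ∀ (u : V) (c : G.Walk u u), c.IsCycle →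
      (∀ x ∈ c.support, x ∈ A) → walkLabel G Λ c = 1)
    (hid : ∀ u w : V, G.Adj u w → u ∈ A → w ∈ A → Λ u w = 1)
    (Q : Set V) (v : V) (hv : v ∈ A \ B)
    (α β : V) (hα : α ∈ A ∩ B) (hβ : β ∈ A ∩ B)
    (P : G.Walk α β) (Rest : G.Walk β α)
    (hcyc : (P.append Rest).IsCycle)
    (hQdisj : ∀ x ∈ (P.append Rest).support, x ∉ Q)
    (hnn : walkLabel G Λ (P.append Rest) ≠ 1)
    (hvP : v ∈ P.support)
    (hPA : ∀ x ∈ P.support, x ∈ A)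
    (hPint : ∀ x ∈ P.support, x ≠ α → x ≠ β → x ∉ A ∩ B)
    (P' : G.Walk α β) (hP' : P'.IsPath)
    (hP'A : ∀ x ∈ P'.support, x ∈ A)
    (hP'v : v ∉ P'.support) (hP'Q : ∀ x ∈ P'.support, x ∉ Q) :
    walkLabel G Λ (P'.append Rest) ≠ 1 ∧
    (∀ x ∈ (P'.append Rest).support, x ∉ Q ∧ x ≠ v) ∧
    ∃ (y : V) (c : G.Walk y y), c.IsCycle ∧ walkLabel G Λ c ≠ 1 ∧
      ∀ x ∈ c.support, x ∉ Q ∧ x ≠ v :=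
  stmt11_general G Λ hskew A B hid Q v hv α β hα hβ P Rest hcyc hQdisj hnn hvP hPA P' hP'A hP'v hP'Q
end
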